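/- arXiv:2009.04733 — 2 statements merged into one kernel-verified Lean document; each statement's English description precedes it below -/
import Mathlib

section
/- Let Φ : F → C(X) be a proto-calculus, f ∈ F, M ⊆ Bdd(F,Φ) a set determining Φ at f, and for each g ∈ M let N_g ⊆ Bdd(F,Φ) be an anchor set (i.e., ⋂_{e∈N_g} ker Φ(e) = {0}). Then the set N := ⋃_{g∈M} N_g·g also determines Φ at f. -/
open Filter Topology

variable {F : Type*} [Ring F] [Algebra ℂ F]
variable {X : Type*} [NormedAddCommGroup X] [NormedSpace ℂ X]

/-- `A` is (the graph of) the bounded everywhere-defined operator `T`. -/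
def IsBddOp (A : X →ₗ.[ℂ] X) (T : X →L[ℂ] X) : Prop :=
  ∀ x y : X, (x, y) ∈ A.graph ↔ T x = y

/-- `A` is a bounded (everywhere-defined) operator. -/
def Bdd (A : X →ₗ.[ℂ] X) : Prop := ∃ T : X →L[ℂ] X, IsBddOp A T

/-- A proto-calculus: a map from a unital algebra into closed operators
satisfying (FC1)–(FC3). -/
structure ProtoCalculus (F X : Type*) [Ring F] [Algebra ℂ F]
    [NormedAddCommGroup X] [NormedSpace ℂ X] where
  toFun : F → (X →ₗ.[ℂ] X)
  closed : ∀ f, IsClosed ((toFun f).graph : Set (X × X))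
  fc1 : ∀ x y : X, (x, y) ∈ (toFun 1).graph ↔ y = x
  fc2_smul : ∀ (l : ℂ) (f : F) (x y : X),
    (x, y) ∈ (toFun f).graph → (x, l • y) ∈ (toFun (l • f)).graph
  fc2_add : ∀ (f g : F) (x y z : X),
    (x, y) ∈ (toFun f).graph → (x, z) ∈ (toFun g).graph →
      (x, y + z) ∈ (toFun (f + g)).graph
  fc3_comp : ∀ (f g : F) (x y z : X),
    (x, y) ∈ (toFun g).graph → (y, z) ∈ (toFun f).graph →
      (x, z) ∈ (toFun (f * g)).graph
  fc3_dom : ∀ (f g : F) (x : X),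
    (∃ y, (x, y) ∈ (toFun g).graph ∧ ∃ z, (y, z) ∈ (toFun f).graph) ↔
      (x ∈ (toFun g).domain ∧ x ∈ (toFun (f * g)).domain)

/-- The set of Φ-bounded elements. -/
def ProtoCalculus.BddElems (Φ : ProtoCalculus F X) : Set F := {f | Bdd (Φ.toFun f)}

/-- The set of Φ-regularizers of `f`. -/
def ProtoCalculus.Reg (Φ : ProtoCalculus F X) (f : F) : Set F :=
  {e | Bdd (Φ.toFun e) ∧ Bdd (Φ.toFun (e * f))}

/-- `M` determines `Φ` at `f`:  `Φ(f)x = y` iff `Φ(ef)x = Φ(e)y` for all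
`e ∈ M ∩ Reg(f,Φ)`. -/
def ProtoCalculus.Determines (Φ : ProtoCalculus F X) (M : Set F) (f : F) : Prop :=
  ∀ x y : X, (x, y) ∈ (Φ.toFun f).graph ↔
    ∀ e ∈ M ∩ Φ.Reg f, ∀ z w : X,
      (x, z) ∈ (Φ.toFun (e * f)).graph → (y, w) ∈ (Φ.toFun e).graph → z = w

/-- An anchor set: a nonempty set of Φ-bounded elements with trivial common kernel. -/
def ProtoCalculus.AnchorSet (Φ : ProtoCalculus F X) (M : Set F) : Prop :=
  M.Nonempty ∧ M ⊆ Φ.BddElems ∧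
    ∀ x : X, (∀ e ∈ M, (x, (0 : X)) ∈ (Φ.toFun e).graph) → x = 0

/-- `[f]_E = { e ∈ E : e f ∈ E }`. -/
def Idx (E : Set F) (f : F) : Set F := {e ∈ E | e * f ∈ E}

/-- `E` is an algebraic core: `[f]_E` determines `Φ` at every `f`. -/
def ProtoCalculus.AlgebraicCore (Φ : ProtoCalculus F X) (E : Set F) : Prop :=
  ∀ f : F, Φ.Determines (Idx E f) f

/-- A calculus: a proto-calculus satisfying (FC4). -/
structure Calculus (F X : Type*) [Ring F] [Algebra ℂ F]
    [NormedAddCommGroup X] [NormedSpace ℂ X] extends ProtoCalculus F X where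
  fc4 : ∀ f : F, toProtoCalculus.Determines toProtoCalculus.BddElems f

/-! The forward implication holds for every set of regularizers, since `Φ(e)Φ(f) ⊆ Φ(ef)`.
For the converse, let `g ∈ M ∩ Reg(f,Φ)` with `Φ(gf)x = z` and `Φ(g)y = w`. For every
`n ∈ N_g`, the element `ng` lies in `N ∩ Reg(f,Φ)`, so `Φ(n)z = Φ(ngf)x = Φ(ng)y = Φ(n)w`;
as `N_g` is an anchor set, `z = w`, and `M` determining `Φ` at `f` gives `Φ(f)x = y`. -/

lemma IsBddOp.mem_graph {A : X →ₗ.[ℂ] X} {T : X →L[ℂ] X} (hT : IsBddOp A T) (x : X) :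
    (x, T x) ∈ A.graph :=
  (hT x _).mpr rfl

namespace ProtoCalculus

variable (Φ : ProtoCalculus F X)

lemma bdd_mul {a b : F} (ha : Bdd (Φ.toFun a)) (hb : Bdd (Φ.toFun b)) :
    Bdd (Φ.toFun (a * b)) := by
  obtain ⟨Ta, hTa⟩ := ha
  obtain ⟨Tb, hTb⟩ := hb
  refine ⟨Ta.comp Tb, fun x y => ?_⟩
  have hcomp : (x, Ta (Tb x)) ∈ (Φ.toFun (a * b)).graph :=
    Φ.fc3_comp a b x _ _ (hTb.mem_graph x) (hTa.mem_graph _)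
  exact ⟨fun h => ((Φ.toFun (a * b)).mem_graph_snd_inj h hcomp rfl).symm, fun h => h ▸ hcomp⟩

lemma mul_mem_reg {n e f : F} (hn : Bdd (Φ.toFun n)) (he : e ∈ Φ.Reg f) :
    n * e ∈ Φ.Reg f :=
  ⟨Φ.bdd_mul hn he.1, mul_assoc n e f ▸ Φ.bdd_mul hn he.2⟩

lemma mem_graph_mul_of_isBddOp {n a : F} {T : X →L[ℂ] X} (hT : IsBddOp (Φ.toFun n) T)
    {x z : X} (hxz : (x, z) ∈ (Φ.toFun a).graph) : (x, T z) ∈ (Φ.toFun (n * a)).graph :=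
  Φ.fc3_comp n a x z (T z) hxz (hT.mem_graph z)

lemma eq_of_mem_graph_mul {e f : F} {x y z w : X} (hxy : (x, y) ∈ (Φ.toFun f).graph)
    (hxz : (x, z) ∈ (Φ.toFun (e * f)).graph) (hyw : (y, w) ∈ (Φ.toFun e).graph) : z = w :=
  (Φ.toFun (e * f)).mem_graph_snd_inj hxz (Φ.fc3_comp e f x y w hxy hyw) rfl

lemma determines_of_forall {M : Set F} {f : F}
    (h : ∀ x y : X, (∀ e ∈ M ∩ Φ.Reg f, ∀ z w : X, (x, z) ∈ (Φ.toFun (e * f)).graph →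
      (y, w) ∈ (Φ.toFun e).graph → z = w) → (x, y) ∈ (Φ.toFun f).graph) :
    Φ.Determines M f :=
  fun x y => ⟨fun hxy _ _ _ _ hxz hyw => Φ.eq_of_mem_graph_mul hxy hxz hyw, h x y⟩

variable {Φ}

lemma AnchorSet.eq_of_forall_mem_graph {N : Set F} (hN : Φ.AnchorSet N) {z w : X}
    (h : ∀ n ∈ N, ∃ u, (z, u) ∈ (Φ.toFun n).graph ∧ (w, u) ∈ (Φ.toFun n).graph) : z = w := by
  refine sub_eq_zero.mp (hN.2.2 _ fun n hn => ?_)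
  obtain ⟨u, hzu, hwu⟩ := h n hn
  simpa using sub_mem hzu hwu

end ProtoCalculus

theorem stmt5_general (Φ : ProtoCalculus F X) (f : F) (M : Set F)
    (hdet : Φ.Determines M f) (N : F → Set F)
    (hN : ∀ g ∈ M, Φ.AnchorSet (N g)) :
    Φ.Determines {h : F | ∃ g ∈ M, ∃ n ∈ N g, h = n * g} f := by
  refine Φ.determines_of_forall fun x y H => (hdet x y).mpr ?_
  rintro g ⟨hgM, hgReg⟩ z w hxz hyw
  refine (hN g hgM).eq_of_forall_mem_graph fun n hn => ?_
  obtain ⟨T, hT⟩ := (hN g hgM).2.1 hn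
  have hx : (x, T z) ∈ (Φ.toFun (n * g * f)).graph :=
    mul_assoc n g f ▸ Φ.mem_graph_mul_of_isBddOp hT hxz
  have hy : (y, T w) ∈ (Φ.toFun (n * g)).graph := Φ.mem_graph_mul_of_isBddOp hT hyw
  have hTzw : T z = T w :=
    H (n * g) ⟨⟨g, hgM, n, hn, rfl⟩, Φ.mul_mem_reg ⟨T, hT⟩ hgReg⟩ _ _ hx hy
  exact ⟨T z, hT.mem_graph z, hTzw ▸ hT.mem_graph w⟩

/-- If `M` determines `Φ` at `f` and for each `g ∈ M` the set `N_g`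
is an anchor set, then `N = ⋃_{g ∈ M} N_g · g` determines `Φ` at `f`. -/
theorem stmt5 (Φ : ProtoCalculus F X) (f : F) (M : Set F) (hM : M ⊆ Φ.BddElems)
    (hdet : Φ.Determines M f) (N : F → Set F)
    (hN : ∀ g ∈ M, Φ.AnchorSet (N g)) :
    Φ.Determines {h : F | ∃ g ∈ M, ∃ n ∈ N g, h = n * g} f :=
  stmt5_general Φ f M hdet N hN
end

section
/- Let Φ : F → C(X) be a calculus with F commutative, let f ∈ F, and let E ⊆ Reg(f,Φ) be an anchor set. Then E determines Φ at f. -/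
open Filter Topology

variable {F : Type*} [Ring F] [Algebra ℂ F]
variable {X : Type*} [NormedAddCommGroup X] [NormedSpace ℂ X]

/- In a commutative algebra every `a ∈ Bdd(F,Φ)` commutes with every `e ∈ E`, and with `e f`;
hence for `(x, z) ∈ Φ(af)` and `(y, w) ∈ Φ(a)` the hypothesis `Φ(ef)x = Φ(e)y` gives
`Φ(e)z = Φ(a)Φ(ef)x = Φ(a)Φ(e)y = Φ(e)Φ(a)y = Φ(e)w`. So `z - w` lies in the common kernel of
the anchor set, i.e. `z = w`, and (FC4) yields `Φ(f)x = y`. -/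

lemma Bdd.exists_mem_graph {A : X →ₗ.[ℂ] X} (hA : Bdd A) (x : X) : ∃ y, (x, y) ∈ A.graph :=
  let ⟨T, hT⟩ := hA
  ⟨T x, (hT x _).mpr rfl⟩

namespace ProtoCalculus

lemma eq_of_mul_eq (Φ : ProtoCalculus F X) {e g a h : F} (heq : e * g = a * h) {x y z y' z' : X}
    (hg : (x, y) ∈ (Φ.toFun g).graph) (he : (y, z) ∈ (Φ.toFun e).graph)
    (hh : (x, y') ∈ (Φ.toFun h).graph) (ha : (y', z') ∈ (Φ.toFun a).graph) : z = z' := by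
  have hz := Φ.fc3_comp e g x y z hg he
  rw [heq] at hz
  exact (Φ.toFun (a * h)).mem_graph_snd_inj hz (Φ.fc3_comp a h x y' z' hh ha) rfl

lemma determines_of_forall_mem_graph (Φ : ProtoCalculus F X) (M : Set F) (f : F)
    (h : ∀ x y : X, (∀ e ∈ M ∩ Φ.Reg f, ∀ z w : X, (x, z) ∈ (Φ.toFun (e * f)).graph →
      (y, w) ∈ (Φ.toFun e).graph → z = w) → (x, y) ∈ (Φ.toFun f).graph) :
    Φ.Determines M f := by
  refine fun x y ↦ ⟨fun hxy e _ z w hz hw ↦ ?_, h x y⟩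
  exact (Φ.toFun (e * f)).mem_graph_snd_inj hz (Φ.fc3_comp e f x y w hxy hw) rfl

lemma AnchorSet.eq_of_forall_exists_mem_graph {Φ : ProtoCalculus F X} {E : Set F}
    (hE : Φ.AnchorSet E) {z w : X}
    (h : ∀ e ∈ E, ∃ u, (z, u) ∈ (Φ.toFun e).graph ∧ (w, u) ∈ (Φ.toFun e).graph) : z = w := by
  refine sub_eq_zero.mp (hE.2.2 (z - w) fun e he ↦ ?_)
  obtain ⟨u, hz, hw⟩ := h e he
  simpa using (Φ.toFun e).graph.sub_mem hz hw

lemma exists_mem_graph_of_mem_graph_mul {F : Type*} [CommRing F] [Algebra ℂ F]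
    (Φ : ProtoCalculus F X) {f e a : F} (he : e ∈ Φ.Reg f) (ha : a ∈ Φ.BddElems) {x y z w : X}
    (hxy : ∀ p q : X, (x, p) ∈ (Φ.toFun (e * f)).graph → (y, q) ∈ (Φ.toFun e).graph → p = q)
    (hz : (x, z) ∈ (Φ.toFun (a * f)).graph) (hw : (y, w) ∈ (Φ.toFun a).graph) :
    ∃ u, (z, u) ∈ (Φ.toFun e).graph ∧ (w, u) ∈ (Φ.toFun e).graph := by
  obtain ⟨u, hzu⟩ := he.1.exists_mem_graph z
  obtain ⟨p, hxp⟩ := he.2.exists_mem_graph x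
  obtain ⟨q, hyq⟩ := he.1.exists_mem_graph y
  obtain ⟨r, hpr⟩ := ha.exists_mem_graph p
  obtain ⟨s, hws⟩ := he.1.exists_mem_graph w
  have hpq : p = q := hxy p q hxp hyq
  subst hpq
  have hur : u = r := Φ.eq_of_mul_eq (by ring) hz hzu hxp hpr
  have hsr : s = r := Φ.eq_of_mul_eq (mul_comm e a) hw hws hyq hpr
  exact ⟨u, hzu, by rwa [hur, ← hsr]⟩

end ProtoCalculus

/-- For a calculus over a commutative algebra, any anchor set
`E ⊆ Reg(f,Φ)` determines `Φ` at `f`. -/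
theorem stmt7 {F : Type*} [CommRing F] [Algebra ℂ F] (Φ : Calculus F X) (f : F)
    (E : Set F) (hE : E ⊆ Φ.toProtoCalculus.Reg f)
    (hanc : Φ.toProtoCalculus.AnchorSet E) :
    Φ.toProtoCalculus.Determines E f := by
  refine Φ.determines_of_forall_mem_graph E f fun x y hxy ↦ ?_
  rw [Φ.fc4 f x y]
  rintro a ⟨ha, -⟩ z w hz hw
  refine hanc.eq_of_forall_exists_mem_graph fun e he ↦ ?_
  exact Φ.exists_mem_graph_of_mem_graph_mul (hE he) ha (hxy e ⟨he, hE he⟩) hz hw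
end
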